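/- arXiv:1609.08869 — 4 statements merged into one kernel-verified Lean document; each statement's English description precedes it below -/
import Mathlib

section
/- Let ρ be the embedding of U(1,1;ℤ[i]) into Sp(2,ℤ) given by g ↦ [[Re g, (Im g)H],[-H(Im g), H(Re g)H]] with H = diag(1,-1), let σ be the automorphism of Sp(2,ℤ) negating the off-diagonal blocks, and let J = [[0,-H],[H,0]]. Then the image of ρ equals {g ∈ Sp(2,ℤ) : σ(g)J = Jσ(g)}. -/
open Matrix

/-- The hermitian form `H = diag(1,-1)`, as a real matrix. -/
noncomputable def Hr : Matrix (Fin 2) (Fin 2) ℝ := !![1, 0; 0, -1]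

/-- The hermitian form `H = diag(1,-1)`, as a complex matrix. -/
noncomputable def Hc : Matrix (Fin 2) (Fin 2) ℂ := !![1, 0; 0, -1]

/-- A complex matrix has Gaussian integer entries. -/
def GaussEntries (g : Matrix (Fin 2) (Fin 2) ℂ) : Prop :=
  ∀ i j, ∃ a b : ℤ, g i j = (a : ℂ) + (b : ℂ) * Complex.I

/-- `U(1,1;ℤ[i])`: Gaussian integer matrices preserving the hermitian form `H`. -/
def U11Z : Set (Matrix (Fin 2) (Fin 2) ℂ) :=
  {g | gᴴ * Hc * g = Hc ∧ GaussEntries g}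

/-- The standard symplectic form matrix `[[0, 1],[-1, 0]]` in `2 × 2` blocks. -/
noncomputable def Jstd : Matrix (Fin 2 ⊕ Fin 2) (Fin 2 ⊕ Fin 2) ℝ :=
  Matrix.fromBlocks 0 1 (-1) 0

/-- `Sp(2;ℤ)`: integral symplectic matrices, viewed inside the real ones. -/
def SpZ : Set (Matrix (Fin 2 ⊕ Fin 2) (Fin 2 ⊕ Fin 2) ℝ) :=
  {g | gᵀ * Jstd * g = Jstd ∧ ∀ i j, ∃ m : ℤ, g i j = (m : ℝ)}

/-- The embedding `ρ : g ↦ [[Re g, (Im g)H],[-H(Im g), H(Re g)H]]`. -/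
noncomputable def rho (g : Matrix (Fin 2) (Fin 2) ℂ) :
    Matrix (Fin 2 ⊕ Fin 2) (Fin 2 ⊕ Fin 2) ℝ :=
  Matrix.fromBlocks (g.map Complex.re) (g.map Complex.im * Hr)
    (-(Hr * g.map Complex.im)) (Hr * g.map Complex.re * Hr)

/-- The automorphism `σ` negating the off-diagonal `2 × 2` blocks. -/
def sigmaBlocks (g : Matrix (Fin 2 ⊕ Fin 2) (Fin 2 ⊕ Fin 2) ℝ) :
    Matrix (Fin 2 ⊕ Fin 2) (Fin 2 ⊕ Fin 2) ℝ :=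
  Matrix.fromBlocks g.toBlocks₁₁ (-g.toBlocks₁₂) (-g.toBlocks₂₁) g.toBlocks₂₂

/-- The matrix `J = [[0,-H],[H,0]]`. -/
noncomputable def JH : Matrix (Fin 2 ⊕ Fin 2) (Fin 2 ⊕ Fin 2) ℝ :=
  Matrix.fromBlocks 0 (-Hr) Hr 0

/-! ### Auxiliary material -/

lemma Hr_mul_Hr : Hr * Hr = 1 := by
  ext i j; fin_cases i <;> fin_cases j <;> simp [Hr, Matrix.mul_apply, Fin.sum_univ_succ]

lemma Hr_transpose : Hrᵀ = Hr := by
  ext i j; fin_cases i <;> fin_cases j <;> simp [Hr]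

lemma Hr_cancel (M : Matrix (Fin 2) (Fin 2) ℝ) : Hr * (Hr * M) = M := by
  rw [← mul_assoc, Hr_mul_Hr, one_mul]

lemma Hr_cancel' (M : Matrix (Fin 2) (Fin 2) ℝ) : M * Hr * Hr = M := by
  rw [mul_assoc, Hr_mul_Hr, mul_one]

/-- The complex matrix `A + iB`. -/
noncomputable def cplx (A B : Matrix (Fin 2) (Fin 2) ℝ) : Matrix (Fin 2) (Fin 2) ℂ :=
  A.map Complex.ofRealHom + Complex.I • B.map Complex.ofRealHom

lemma cplx_apply (A B : Matrix (Fin 2) (Fin 2) ℝ) (i j : Fin 2) :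
    cplx A B i j = (A i j : ℂ) + Complex.I * (B i j : ℂ) := rfl

lemma cplx_eq_iff (X Y W Z : Matrix (Fin 2) (Fin 2) ℝ) :
    cplx X Y = cplx W Z ↔ X = W ∧ Y = Z := by
  constructor
  · intro h
    constructor <;> ext i j <;>
      have h' := congrFun (congrFun h i) j
    · exact ((by simpa [cplx, Complex.ext_iff] using h' :
        X i j = W i j ∧ Y i j = Z i j)).1
    · exact ((by simpa [cplx, Complex.ext_iff] using h' :
        X i j = W i j ∧ Y i j = Z i j)).2
  · rintro ⟨rfl, rfl⟩; rfl

lemma Hc_eq : Hc = cplx Hr 0 := by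
  ext i j; fin_cases i <;> fin_cases j <;> simp [Hc, Hr, cplx_apply]

lemma expand (A B : Matrix (Fin 2) (Fin 2) ℝ) :
    (cplx A B)ᴴ * Hc * (cplx A B) =
      cplx (Aᵀ * Hr * A + Bᵀ * Hr * B) (Aᵀ * Hr * B - Bᵀ * Hr * A) := by
  ext i j
  fin_cases i <;> fin_cases j <;>
    simp [cplx, Hr, Hc, Matrix.mul_apply, Fin.sum_univ_succ, Matrix.conjTranspose_apply,
      Complex.ext_iff] <;>
    constructor <;> ring

lemma mem_U11Z_iff (A B : Matrix (Fin 2) (Fin 2) ℝ) :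
    (cplx A B)ᴴ * Hc * (cplx A B) = Hc ↔
      (Aᵀ * Hr * A + Bᵀ * Hr * B = Hr ∧ Aᵀ * Hr * B = Bᵀ * Hr * A) := by
  rw [expand, Hc_eq, cplx_eq_iff, sub_eq_zero]

/-- The block matrix `[[A, BH],[-HB, HAH]]`. -/
noncomputable def sB (A B : Matrix (Fin 2) (Fin 2) ℝ) :
    Matrix (Fin 2 ⊕ Fin 2) (Fin 2 ⊕ Fin 2) ℝ :=
  Matrix.fromBlocks A (B*Hr) (-(Hr*B)) (Hr*A*Hr)

lemma rho_cplx (A B : Matrix (Fin 2) (Fin 2) ℝ) : rho (cplx A B) = sB A B := by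
  have hre : (cplx A B).map Complex.re = A := by
    ext i j; simp [cplx_apply, Matrix.map_apply]
  have him : (cplx A B).map Complex.im = B := by
    ext i j; simp [cplx_apply, Matrix.map_apply]
  rw [rho, sB, hre, him]

lemma symp_eq (A B : Matrix (Fin 2) (Fin 2) ℝ) :
    (sB A B)ᵀ * Jstd * sB A B =
    Matrix.fromBlocks (Bᵀ*Hr*A - Aᵀ*Hr*B) ((Bᵀ*Hr*B + Aᵀ*Hr*A)*Hr)
      (-(Hr*(Aᵀ*Hr*A + Bᵀ*Hr*B))) (Hr*(Bᵀ*Hr*A - Aᵀ*Hr*B)*Hr) := by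
  simp only [sB, Jstd, Matrix.fromBlocks_transpose, Matrix.fromBlocks_multiply,
    Matrix.transpose_neg, Matrix.transpose_mul, Hr_transpose]
  noncomm_ring

lemma symp_iff (A B : Matrix (Fin 2) (Fin 2) ℝ) :
    (sB A B)ᵀ * Jstd * sB A B = Jstd ↔
      (Aᵀ*Hr*A + Bᵀ*Hr*B = Hr ∧ Aᵀ*Hr*B = Bᵀ*Hr*A) := by
  rw [symp_eq]
  constructor
  · intro h
    rw [show (Jstd : Matrix (Fin 2 ⊕ Fin 2) (Fin 2 ⊕ Fin 2) ℝ) =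
        Matrix.fromBlocks 0 1 (-1) 0 from rfl, Matrix.fromBlocks_inj] at h
    obtain ⟨h11, h12, h21, h22⟩ := h
    have h1 : Aᵀ*Hr*A + Bᵀ*Hr*B = Hr := by
      have := congrArg (Hr * ·) (neg_eq_iff_eq_neg.mp h21)
      simpa [Hr_cancel] using this
    exact ⟨h1, (sub_eq_zero.mp h11).symm⟩
  · rintro ⟨h1, h2⟩
    rw [h2, sub_self, add_comm (Bᵀ*Hr*B), h1, Hr_mul_Hr]
    simp [Jstd]

lemma comm_sB (A B : Matrix (Fin 2) (Fin 2) ℝ) :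
    sigmaBlocks (sB A B) * JH = JH * sigmaBlocks (sB A B) := by
  simp only [sB, sigmaBlocks, JH, Matrix.toBlocks_fromBlocks₁₁, Matrix.toBlocks_fromBlocks₁₂,
    Matrix.toBlocks_fromBlocks₂₁, Matrix.toBlocks_fromBlocks₂₂, Matrix.fromBlocks_multiply,
    neg_neg]
  congr 1 <;> simp [mul_assoc, Hr_mul_Hr, Hr_cancel]

lemma sB_int (A B : Matrix (Fin 2) (Fin 2) ℝ)
    (hA : ∀ i j, ∃ m : ℤ, A i j = (m : ℝ)) (hB : ∀ i j, ∃ m : ℤ, B i j = (m : ℝ)) :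
    ∀ i j, ∃ m : ℤ, sB A B i j = (m : ℝ) := by
  rintro (i | i) (j | j)
  · obtain ⟨m, hm⟩ := hA i j
    exact ⟨m, by simpa [sB] using hm⟩
  · fin_cases j
    · obtain ⟨m, hm⟩ := hB i 0
      exact ⟨m, by simp [sB, Hr, Matrix.mul_apply, Matrix.vecMul, dotProduct, Fin.sum_univ_succ, hm]⟩
    · obtain ⟨m, hm⟩ := hB i 1
      exact ⟨-m, by simp [sB, Hr, Matrix.mul_apply, Matrix.vecMul, dotProduct, Fin.sum_univ_succ, hm]⟩
  · fin_cases i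
    · obtain ⟨m, hm⟩ := hB 0 j
      exact ⟨-m, by simp [sB, Hr, Matrix.mul_apply, Matrix.vecMul, dotProduct, Fin.sum_univ_succ, hm]⟩
    · obtain ⟨m, hm⟩ := hB 1 j
      exact ⟨m, by simp [sB, Hr, Matrix.mul_apply, Matrix.vecMul, dotProduct, Fin.sum_univ_succ, hm]⟩
  · fin_cases i <;> fin_cases j
    · obtain ⟨m, hm⟩ := hA 0 0
      exact ⟨m, by simp [sB, Hr, Matrix.mul_apply, Matrix.vecMul, dotProduct, Fin.sum_univ_succ, hm]⟩
    · obtain ⟨m, hm⟩ := hA 0 1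
      exact ⟨-m, by simp [sB, Hr, Matrix.mul_apply, Matrix.vecMul, dotProduct, Fin.sum_univ_succ, hm]⟩
    · obtain ⟨m, hm⟩ := hA 1 0
      exact ⟨-m, by simp [sB, Hr, Matrix.mul_apply, Matrix.vecMul, dotProduct, Fin.sum_univ_succ, hm]⟩
    · obtain ⟨m, hm⟩ := hA 1 1
      exact ⟨m, by simp [sB, Hr, Matrix.mul_apply, Matrix.vecMul, dotProduct, Fin.sum_univ_succ, hm]⟩

/-- The image of `ρ : U(1,1;ℤ[i]) → Sp(2;ℤ)` is `{g ∈ Sp(2;ℤ) : σ(g)J = Jσ(g)}`. -/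
theorem image_of_rho :
    rho '' U11Z = {g | g ∈ SpZ ∧ sigmaBlocks g * JH = JH * sigmaBlocks g} := by
  ext s
  constructor
  · rintro ⟨g, ⟨hU, hG⟩, rfl⟩
    set A := g.map Complex.re with hA
    set B := g.map Complex.im with hB
    have hg : g = cplx A B := by
      ext i j
      simp [cplx_apply, hA, hB, Matrix.map_apply, Complex.ext_iff]
    rw [hg] at hU ⊢
    rw [rho_cplx]
    obtain ⟨h1, h2⟩ := (mem_U11Z_iff A B).mp hU
    refine ⟨⟨(symp_iff A B).mpr ⟨h1, h2⟩, ?_⟩, comm_sB A B⟩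
    refine sB_int A B ?_ ?_
    · intro i j
      obtain ⟨a, b, hab⟩ := hG i j
      exact ⟨a, by simp [hA, Matrix.map_apply, hab]⟩
    · intro i j
      obtain ⟨a, b, hab⟩ := hG i j
      exact ⟨b, by simp [hB, Matrix.map_apply, hab]⟩
  · rintro ⟨⟨hsymp, hint⟩, hcomm⟩
    set a := s.toBlocks₁₁ with ha
    set b := s.toBlocks₁₂ with hb
    set c := s.toBlocks₂₁ with hc
    set d := s.toBlocks₂₂ with hd
    have hs : s = Matrix.fromBlocks a b c d := (Matrix.fromBlocks_toBlocks s).symm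
    have hσ : sigmaBlocks s = Matrix.fromBlocks a (-b) (-c) d := rfl
    rw [hσ, JH, Matrix.fromBlocks_multiply, Matrix.fromBlocks_multiply,
      Matrix.fromBlocks_inj] at hcomm
    obtain ⟨e11, e12, e21, e22⟩ := hcomm
    simp only [mul_zero, zero_mul, mul_neg, neg_mul, zero_add, add_zero, mul_one, neg_neg,
      zero_sub, neg_zero] at e11 e12 e21 e22
    -- e11 : -(b * Hr) = -(Hr * c)  (or similar);  derive c and d
    have hcval : c = -(Hr * (b * Hr)) := by
      have h := congrArg (Hr * ·) e11
      simpa [Hr_cancel] using h.symm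
    have hdval : d = Hr * (a * Hr) := by
      have h := congrArg (Hr * ·) e12
      simpa [Hr_cancel] using h.symm
    have hsB : s = sB a (b * Hr) := by
      rw [hs, hcval, hdval, sB, Hr_cancel' b, mul_assoc Hr a Hr]
    rw [hsB] at hsymp
    obtain ⟨h1, h2⟩ := (symp_iff a (b * Hr)).mp hsymp
    refine ⟨cplx a (b * Hr), ⟨(mem_U11Z_iff a (b * Hr)).mpr ⟨h1, h2⟩, ?_⟩, ?_⟩
    · intro i j
      fin_cases j <;> simp only [Fin.zero_eta, Fin.mk_one, Fin.isValue]
      · obtain ⟨m, hm⟩ := hint (Sum.inl i) (Sum.inl 0)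
        obtain ⟨n, hn⟩ := hint (Sum.inl i) (Sum.inr 0)
        refine ⟨m, n, ?_⟩
        rw [cplx_apply]
        have h1' : a i 0 = (m : ℝ) := by simpa [ha, Matrix.toBlocks₁₁] using hm
        have h2' : (b * Hr) i 0 = (n : ℝ) := by
          simp [Hr, Matrix.mul_apply, Fin.sum_univ_succ, hb, Matrix.toBlocks₁₂]
          simpa [hb, Matrix.toBlocks₁₂] using hn
        rw [h1', h2']; push_cast; ring
      · obtain ⟨m, hm⟩ := hint (Sum.inl i) (Sum.inl 1)
        obtain ⟨n, hn⟩ := hint (Sum.inl i) (Sum.inr 1)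
        refine ⟨m, -n, ?_⟩
        rw [cplx_apply]
        have h1' : a i 1 = (m : ℝ) := by simpa [ha, Matrix.toBlocks₁₁] using hm
        have h2' : (b * Hr) i 1 = (-n : ℝ) := by
          simp [Hr, Matrix.mul_apply, Fin.sum_univ_succ, hb, Matrix.toBlocks₁₂]
          simpa [hb, Matrix.toBlocks₁₂] using hn
        rw [h1', h2']; push_cast; ring
    · rw [rho_cplx, ← hsB]
end

section
/- For z in the open unit disc, the matrix Ω_z = (i/(1-z²))·[[1+z², 2z],[2z, 1+z²]] is symmetric and has positive-definite imaginary part, i.e., Ω_z lies in the Siegel upper half space 𝕊₂. -/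
open Matrix

/-- The period matrix `Ω_z = (i/(1-z²))·[[1+z², 2z],[2z, 1+z²]]`. -/
noncomputable def OmegaZ (z : ℂ) : Matrix (Fin 2) (Fin 2) ℂ :=
  (Complex.I / (1 - z ^ 2)) • !![1 + z ^ 2, 2 * z; 2 * z, 1 + z ^ 2]

/-!
With `p = (1 + z)/(1 - z)` and `q = (1 - z)/(1 + z)` one has `(1 + z²)/(1 - z²) = (p + q)/2` and
`2z/(1 - z²) = (p - q)/2`, so `Im Ω_z = [[α + β, α - β], [α - β, α + β]]` with `α = Re p / 2` and
`β = Re q / 2`. This matrix is `U · diag(α, β) · Uᵀ` for `U = [[1, 1], [1, -1]]`, and both `α` and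
`β` are positive because `Re ((1 + w)/(1 - w))` is the Poisson kernel `(1 - ‖w‖²)/‖1 - w‖²`.
-/

theorem one_sub_ne_zero_of_norm_lt_one {R : Type*} [SeminormedRing R] [NormOneClass R] {w : R}
    (hw : ‖w‖ < 1) : 1 - w ≠ 0 := by
  intro h
  simp [← sub_eq_zero.mp h] at hw

open Complex in
theorem Complex.re_one_add_div_one_sub_pos {w : ℂ} (hw : ‖w‖ < 1) :
    0 < ((1 + w) / (1 - w)).re := by
  have h := congrFun (poissonKernel_eq_re_herglotzRieszKernel (c := 0) (w := w)) 1
  simp only [poissonKernel, herglotzRieszKernel, Function.comp_apply, sub_zero, norm_one] at h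
  rw [← h]
  have := one_sub_ne_zero_of_norm_lt_one hw
  apply div_pos
  · nlinarith [norm_nonneg w]
  · positivity

theorem Matrix.posDef_add_sub_sub_add {a b : ℝ} (ha : 0 < a) (hb : 0 < b) :
    !![a + b, a - b; a - b, a + b].PosDef := by
  have hU : IsUnit !![(1 : ℝ), 1; 1, -1] := by
    norm_num [isUnit_iff_isUnit_det, det_fin_two]
  have hD : (diagonal ![a, b]).PosDef := PosDef.diagonal (by simp [Fin.forall_fin_two, ha, hb])
  rw [← hU.posDef_star_right_conjugate_iff] at hD
  convert hD using 1
  rw [diagonal_fin_two]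
  ext i j
  fin_cases i <;> fin_cases j <;> simp [mul_apply, Fin.sum_univ_two] <;> ring

theorem omegaZ_eq_I_smul {z : ℂ} (h₁ : 1 - z ≠ 0) (h₂ : 1 + z ≠ 0) :
    let a := (1 + z) / (1 - z) / 2
    let b := (1 - z) / (1 + z) / 2
    OmegaZ z = Complex.I • !![a + b, a - b; a - b, a + b] := by
  have h : 1 - z ^ 2 ≠ 0 := by
    rw [show 1 - z ^ 2 = (1 - z) * (1 + z) by ring]
    exact mul_ne_zero h₁ h₂
  ext i j
  fin_cases i <;> fin_cases j <;> simp [OmegaZ] <;> field_simp <;> ring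

theorem omegaZ_map_im {z : ℂ} (h₁ : 1 - z ≠ 0) (h₂ : 1 + z ≠ 0) :
    let α := ((1 + z) / (1 - z)).re / 2
    let β := ((1 - z) / (1 + z)).re / 2
    (OmegaZ z).map Complex.im = !![α + β, α - β; α - β, α + β] := by
  rw [omegaZ_eq_I_smul h₁ h₂]
  ext i j
  fin_cases i <;> fin_cases j <;> simp

/-- For `|z| < 1`, the matrix `Ω_z` is symmetric with positive-definite imaginary part,
i.e. `Ω_z` lies in the Siegel upper half space `𝕊₂`. -/
theorem OmegaZ_mem_Siegel (z : ℂ) (hz : ‖z‖ < 1) :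
    (OmegaZ z)ᵀ = OmegaZ z ∧ ((OmegaZ z).map Complex.im).PosDef := by
  refine ⟨by ext i j; fin_cases i <;> fin_cases j <;> rfl, ?_⟩
  have hz' : ‖-z‖ < 1 := by rwa [norm_neg]
  have h₂ : 1 + z ≠ 0 := by simpa using one_sub_ne_zero_of_norm_lt_one hz'
  have hp := Complex.re_one_add_div_one_sub_pos hz
  have hq : 0 < ((1 - z) / (1 + z)).re := by
    simpa [← sub_eq_add_neg] using Complex.re_one_add_div_one_sub_pos hz'
  rw [omegaZ_map_im (one_sub_ne_zero_of_norm_lt_one hz) h₂]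
  exact posDef_add_sub_sub_add (by positivity) (by positivity)
end

section
/- The matrices [[1,2],[0,1]] and [[0,1],[-1,0]] generate the theta group Γ_θ = {[[a,b],[c,d]] ∈ SL(2,ℤ) : ab ≡ cd ≡ 0 (mod 2)}. -/
/-! Since `ad - bc` is odd, `ab ≡ cd ≡ 0 (mod 2)` says that `g ≡ 1` or `g ≡ [[0,1],[1,0]]`
mod 2, i.e. that `g` mod 2 commutes with `[[0,1],[1,0]]`; so `Γ_θ` is a subgroup, and it
contains `T2` and `S`. Conversely, for `g ∈ Γ_θ` the entry `a + c` is odd. If `c ≠ 0`,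
multiplying by `S * T2 ^ k` on the left turns the first column `(a, c)` into
`(c, -(a + 2kc))`, and `k` can be chosen with `|a + 2kc| < |c|` because parity rules out
`|a + 2kc| = |c|`. Descent on `|c|` ends at `c = 0`, where `g = ±T2 ^ m` and `-1 = S ^ 2`. -/

open Matrix

/-- The matrix `[[1,2],[0,1]]` in `SL(2,ℤ)`. -/
def T2 : Matrix.SpecialLinearGroup (Fin 2) ℤ :=
  ⟨!![1, 2; 0, 1], by norm_num [Matrix.det_fin_two_of]⟩

/-- The matrix `[[0,1],[-1,0]]` in `SL(2,ℤ)`. -/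
def S : Matrix.SpecialLinearGroup (Fin 2) ℤ :=
  ⟨!![0, 1; -1, 0], by norm_num [Matrix.det_fin_two_of]⟩

open scoped MatrixGroups

lemma exists_natAbs_add_two_mul_lt {a c : ℤ} (hc : c ≠ 0) (h : Odd (a + c)) :
    ∃ k : ℤ, (a + 2 * k * c).natAbs < c.natAbs := by
  set m := 2 * c.natAbs
  have hm : 0 < m := by omega
  have hm_cast : (m : ℤ) = 2 * c.natAbs := by simp only [m, Nat.cast_mul, Nat.cast_ofNat]
  refine ⟨-(a.bdiv m * c.sign), ?_⟩
  -- `a + 2kc = a.bmod m ∈ [-|c|, |c|)`, and parity rules out `-|c|`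
  have hk : a + 2 * -(a.bdiv m * c.sign) * c = a.bmod m := by
    linear_combination (-1 : ℤ) * Int.bmod_add_bdiv a m + a.bdiv m * hm_cast
      - 2 * a.bdiv m * Int.sign_mul_self c
  have hpar : a.bmod m % 2 = a % 2 := by
    have h2m : (2 : ℤ) ∣ m := ⟨_, hm_cast⟩
    rw [← Int.emod_emod_of_dvd _ h2m, Int.bmod_emod, Int.emod_emod_of_dvd _ h2m]
  have hlo := Int.le_bmod (x := a) hm
  have hhi := Int.bmod_lt (x := a) hm
  rw [hm_cast] at hlo hhi
  rw [Int.odd_iff] at h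
  rw [hk]
  omega

lemma ZMod.two_eq_and_eq_iff_mul_eq_zero {a b c d : ZMod 2} (h : a * d - b * c = 1) :
    a = d ∧ b = c ↔ a * b = 0 ∧ c * d = 0 := by
  revert a b c d
  decide

lemma ZMod.two_add_eq_one_of_mul_self_sub_mul_self_eq_one {a c : ZMod 2} (h : a * a - c * c = 1) :
    a + c = 1 := by
  revert a c
  decide

lemma intCast_mul_sub_mul_eq_one (R : Type*) [CommRing R] (g : SL(2, ℤ)) :
    ((g 0 0 : ℤ) : R) * (g 1 1 : ℤ) - (g 0 1 : ℤ) * (g 1 0 : ℤ) = 1 := by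
  have hdet := g.prop
  rw [Matrix.det_fin_two] at hdet
  exact_mod_cast congrArg (Int.cast : ℤ → R) hdet

def swapModTwo : SL(2, ZMod 2) :=
  ⟨!![0, 1; 1, 0], by decide⟩

def thetaGroup : Subgroup SL(2, ℤ) :=
  (Subgroup.centralizer {swapModTwo}).comap (SpecialLinearGroup.map (Int.castRingHom (ZMod 2)))

section ThetaGroup

variable {g : SL(2, ℤ)}

lemma mem_thetaGroup_iff :
    g ∈ thetaGroup ↔ ((g 0 0 : ℤ) : ZMod 2) = (g 1 1 : ℤ) ∧ ((g 0 1 : ℤ) : ZMod 2) = (g 1 0 : ℤ) := by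
  rw [thetaGroup, Subgroup.mem_comap, Subgroup.mem_centralizer_singleton_iff]
  refine (Matrix.SpecialLinearGroup.ext_iff _ _).trans ?_
  simp only [Matrix.SpecialLinearGroup.coe_mul, Matrix.SpecialLinearGroup.map_apply_coe]
  simp [swapModTwo, Fin.forall_fin_two, Matrix.mul_apply]
  tauto

lemma mem_thetaGroup_iff_two_dvd_mul :
    g ∈ thetaGroup ↔ 2 ∣ g 0 0 * g 0 1 ∧ 2 ∣ g 1 0 * g 1 1 := by
  rw [mem_thetaGroup_iff,
    ZMod.two_eq_and_eq_iff_mul_eq_zero (intCast_mul_sub_mul_eq_one (ZMod 2) g)]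
  simp only [← Int.cast_mul, ZMod.intCast_zmod_eq_zero_iff_dvd, Nat.cast_ofNat]

lemma odd_add_of_mem_thetaGroup (hg : g ∈ thetaGroup) : Odd (g 0 0 + g 1 0) := by
  obtain ⟨had, hbc⟩ := mem_thetaGroup_iff.1 hg
  have hdet := intCast_mul_sub_mul_eq_one (ZMod 2) g
  rw [← had, hbc] at hdet
  rw [← ZMod.intCast_eq_one_iff_odd, Int.cast_add]
  exact ZMod.two_add_eq_one_of_mul_self_sub_mul_self_eq_one hdet

end ThetaGroup

lemma closure_T2_S_le_thetaGroup : Subgroup.closure {T2, S} ≤ thetaGroup := by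
  rw [Subgroup.closure_le]
  rintro _ (rfl | rfl) <;> rw [SetLike.mem_coe, mem_thetaGroup_iff] <;> decide

lemma coe_T2_zpow (k : ℤ) : ((T2 ^ k : SL(2, ℤ)) : Matrix (Fin 2) (Fin 2) ℤ) = !![1, 2 * k; 0, 1] := by
  have hT2 : T2 = ModularGroup.T ^ (2 : ℤ) := by decide
  rw [hT2, ← _root_.zpow_mul]
  exact ModularGroup.coe_T_zpow _

lemma S_sq : S ^ 2 = -1 := by decide

lemma S_mul_T2_zpow_mul_apply_one_zero (k : ℤ) (g : SL(2, ℤ)) :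
    (S * T2 ^ k * g) 1 0 = -(g 0 0 + 2 * k * g 1 0) := by
  rw [Matrix.SpecialLinearGroup.coe_mul, Matrix.SpecialLinearGroup.coe_mul, coe_T2_zpow]
  simp [S, Matrix.mul_apply, Fin.sum_univ_two]
  ring

lemma mem_closure_T2_S_of_apply_one_zero_eq_zero {g : SL(2, ℤ)} (hg : g ∈ thetaGroup)
    (hc : g 1 0 = 0) : g ∈ Subgroup.closure {T2, S} := by
  have had : g 0 0 * g 1 1 = 1 := by
    have hdet := g.prop
    rwa [Matrix.det_fin_two, hc, mul_zero, sub_zero] at hdet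
  obtain ⟨m, hm⟩ : Even (g 0 1) := by
    rw [← ZMod.intCast_eq_zero_iff_even, (mem_thetaGroup_iff.1 hg).2, hc, Int.cast_zero]
  have hT2 : T2 ∈ Subgroup.closure {T2, S} := Subgroup.subset_closure (by simp)
  have hS : S ∈ Subgroup.closure {T2, S} := Subgroup.subset_closure (by simp)
  rcases Int.eq_one_or_neg_one_of_mul_eq_one' had with ⟨ha, hd⟩ | ⟨ha, hd⟩
  · convert zpow_mem hT2 m using 1
    ext i j
    fin_cases i <;> fin_cases j <;> simp [coe_T2_zpow, ha, hd, hc, hm, two_mul]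
  · convert mul_mem (pow_mem hS 2) (zpow_mem hT2 (-m)) using 1
    ext i j
    fin_cases i <;> fin_cases j <;> simp [S_sq, coe_T2_zpow, ha, hd, hc, hm, two_mul]

lemma thetaGroup_le_closure_T2_S : thetaGroup ≤ Subgroup.closure {T2, S} := by
  intro g hg
  induction hn : (g 1 0).natAbs using Nat.strong_induction_on generalizing g with
  | _ n ih =>
  by_cases hc : g 1 0 = 0
  · exact mem_closure_T2_S_of_apply_one_zero_eq_zero hg hc
  obtain ⟨k, hk⟩ := exists_natAbs_add_two_mul_lt hc (odd_add_of_mem_thetaGroup hg)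
  have hST : S * T2 ^ k ∈ Subgroup.closure {T2, S} :=
    mul_mem (Subgroup.subset_closure (by simp)) (zpow_mem (Subgroup.subset_closure (by simp)) k)
  have hreduced : S * T2 ^ k * g ∈ Subgroup.closure {T2, S} :=
    ih _ (hn ▸ hk) (mul_mem (closure_T2_S_le_thetaGroup hST) hg)
      (by rw [S_mul_T2_zpow_mul_apply_one_zero, Int.natAbs_neg])
  simpa only [inv_mul_cancel_left] using mul_mem (inv_mem hST) hreduced

/-- `[[1,2],[0,1]]` and `[[0,1],[-1,0]]` generate the theta group
`Γ_θ = {[[a,b],[c,d]] ∈ SL(2,ℤ) : ab ≡ cd ≡ 0 (mod 2)}`. -/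
theorem theta_group_generators (g : Matrix.SpecialLinearGroup (Fin 2) ℤ) :
    g ∈ Subgroup.closure {T2, S} ↔
      (2 ∣ (g : Matrix (Fin 2) (Fin 2) ℤ) 0 0 * (g : Matrix (Fin 2) (Fin 2) ℤ) 0 1 ∧
       2 ∣ (g : Matrix (Fin 2) (Fin 2) ℤ) 1 0 * (g : Matrix (Fin 2) (Fin 2) ℤ) 1 1) := by
  rw [← mem_thetaGroup_iff_two_dvd_mul,
    le_antisymm closure_T2_S_le_thetaGroup thetaGroup_le_closure_T2_S]
end

section
/- For every prime p with p ≡ 5 (mod 8), the p-adic valuation of the central-type binomial coefficient C((p²-1)/4, (p²-1)/8) equals 1. -/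
/-- For every prime `p ≡ 5 (mod 8)`, the `p`-adic valuation of the binomial coefficient
`C((p²-1)/4, (p²-1)/8)` equals `1`. -/
theorem padic_val_central_binomial (p : ℕ) (hp : p.Prime) (h : p % 8 = 5) :
    padicValNat p (Nat.choose ((p ^ 2 - 1) / 4) ((p ^ 2 - 1) / 8)) = 1 := by
  haveI : Fact p.Prime := ⟨hp⟩
  obtain ⟨m, hm⟩ : ∃ m, p = 8 * m + 5 := ⟨p / 8, by omega⟩
  subst hm
  have hp2 : (8 * m + 5) ^ 2 = 64 * m ^ 2 + 80 * m + 25 := by ring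
  have hk : ((8 * m + 5) ^ 2 - 1) / 8 = 8 * m ^ 2 + 10 * m + 3 := by rw [hp2]; omega
  have hn : ((8 * m + 5) ^ 2 - 1) / 4 = 16 * m ^ 2 + 20 * m + 6 := by rw [hp2]; omega
  rw [hk, hn]
  set p := 8 * m + 5
  set k := 8 * m ^ 2 + 10 * m + 3 with hkdef
  have hnk : 16 * m ^ 2 + 20 * m + 6 = 2 * k := by rw [hkdef]; ring
  have hkmod : k % p = 5 * m + 3 := by
    have : k = 5 * m + 3 + p * m := by rw [hkdef]; ring
    rw [this, Nat.add_mul_mod_self_left, Nat.mod_eq_of_lt (by omega)]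
  have hlog : Nat.log p (2 * k) < 2 := by
    apply Nat.log_lt_of_lt_pow (by omega)
    have : p ^ 2 = 64 * m ^ 2 + 80 * m + 25 := by ring
    rw [this, hkdef]; omega
  rw [hnk, padicValNat_choose (b := 2) (by omega) hlog]
  have h2k : 2 * k - k = k := by omega
  rw [h2k]
  have : Finset.Ico 1 2 = {1} := rfl
  rw [this, Finset.filter_singleton, if_pos (by rw [pow_one, hkmod]; omega)]
  rfl
end
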